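/- For every ρ > 1, ∫_0^{π/2} I₁( (log ρ / 2)·cos θ ) dθ = (ρ − 2√ρ + 1)/(√ρ · log ρ). -/

import Mathlib

/-!
Expand `I₁(a cos θ)` in its power series and integrate term by term (the terms are dominated by
those of `I₁(|a|)`). Wallis' formula `∫₀^{π/2} cos^{2n+1} θ dθ = 4ⁿ (n!)² / (2n+1)!` turns the
`n`-th term into `a^{2n+1} / (2n+2)!`, and these sum to `(cosh a - 1) / a`. Finally,
`a = (log ρ) / 2` gives `eᵃ = √ρ`.
-/

open MeasureTheory Filter

/-- The modified Bessel function of the first kind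
`I₁(x) = ∑ (x/2)^{2n+1} / (n!·(n+1)!)`. -/
noncomputable def I1 (x : ℝ) : ℝ :=
  ∑' n : ℕ, (x / 2) ^ (2 * n + 1) / ((Nat.factorial n : ℝ) * (Nat.factorial (n + 1) : ℝ))

open Real Nat

theorem integral_cos_pow_two_mul_add_one (n : ℕ) :
    ∫ x in (0 : ℝ)..(π / 2), cos x ^ (2 * n + 1) = 4 ^ n * (n ! : ℝ) ^ 2 / (2 * n + 1)! := by
  induction n with
  | zero => simp
  | succ k ih =>
    rw [show 2 * (k + 1) + 1 = (2 * k + 1) + 2 by ring, integral_cos_pow, ih, cos_pi_div_two,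
      sin_zero]
    simp only [factorial_succ]
    push_cast
    field_simp
    ring

theorem hasSum_pow_two_mul_add_one_div_factorial (a : ℝ) :
    HasSum (fun n : ℕ ↦ a ^ (2 * n + 1) / (2 * n + 2)!) ((cosh a - 1) / a) := by
  rcases eq_or_ne a 0 with rfl | ha
  · simp
  have hcosh : HasSum (fun n : ℕ ↦ a ^ (2 * n + 2) / (2 * n + 2)!) (cosh a - 1) := by
    simpa [mul_add] using (hasSum_nat_add_iff' 1).mpr (hasSum_cosh a)
  have hterm : (fun n : ℕ ↦ a ^ (2 * n + 1) / (2 * n + 2)!) =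
      fun n ↦ a ^ (2 * n + 2) / (2 * n + 2)! / a := funext fun n ↦ by
    rw [pow_succ _ (2 * n + 1)]
    field_simp
  exact hterm ▸ hcosh.div_const a

namespace I1

noncomputable def term (n : ℕ) (x : ℝ) : ℝ :=
  (x / 2) ^ (2 * n + 1) / ((n ! : ℝ) * (n + 1)!)

theorem eq_tsum_term (x : ℝ) : I1 x = ∑' n, term n x := rfl

theorem term_mul (n : ℕ) (x y : ℝ) : term n (x * y) = term n x * y ^ (2 * n + 1) := by
  simp only [term]
  ring

theorem summable_term (x : ℝ) : Summable fun n ↦ term n x := by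
  refine .of_norm_bounded ((summable_pow_div_factorial ((x / 2) ^ 2)).mul_left |x / 2|) fun n ↦ ?_
  have hterm : term n x = x / 2 * (((x / 2) ^ 2) ^ n / n !) / (n + 1)! := by
    rw [term, pow_succ, pow_mul]
    ring
  have hfac : (1 : ℝ) ≤ (n + 1)! := mod_cast factorial_pos _
  rw [hterm, norm_div, norm_mul, Real.norm_eq_abs, Real.norm_of_nonneg (by positivity),
    Real.norm_natCast]
  exact div_le_self (by positivity) hfac

theorem integral_term_mul_cos (n : ℕ) (a : ℝ) :
    ∫ θ in (0 : ℝ)..(π / 2), term n (a * cos θ) = a ^ (2 * n + 1) / (2 * n + 2)! := by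
  simp_rw [term_mul]
  rw [intervalIntegral.integral_const_mul, integral_cos_pow_two_mul_add_one, term,
    show 2 * n + 2 = (2 * n + 1) + 1 by ring, div_pow, pow_succ (2 : ℝ), pow_mul]
  norm_num
  simp only [factorial_succ]
  push_cast
  field_simp
  ring

theorem integral_mul_cos (a : ℝ) :
    ∫ θ in (0 : ℝ)..(π / 2), I1 (a * cos θ) = (cosh a - 1) / a := by
  have hbound : ∀ n θ, ‖term n (a * cos θ)‖ ≤ |term n a| := fun n θ ↦ by
    rw [term_mul, norm_mul, norm_pow, Real.norm_eq_abs, Real.norm_eq_abs]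
    exact mul_le_of_le_one_right (abs_nonneg _) (pow_le_one₀ (abs_nonneg _) (abs_cos_le_one θ))
  have hcont (n : ℕ) : Continuous fun θ ↦ term n (a * cos θ) := by
    unfold term
    fun_prop
  have hsum := intervalIntegral.hasSum_integral_of_dominated_convergence
    (μ := volume) (a := 0) (b := π / 2)
    (fun n _ ↦ |term n a|) (fun n ↦ (hcont n).aestronglyMeasurable)
    (fun n ↦ ae_of_all _ fun θ _ ↦ hbound n θ)
    (ae_of_all _ fun _ _ ↦ (summable_term a).abs) intervalIntegrable_const
    (ae_of_all _ fun θ _ ↦ (summable_term (a * cos θ)).hasSum)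
  simp only [integral_term_mul_cos] at hsum
  simp_rw [eq_tsum_term]
  exact hsum.unique (hasSum_pow_two_mul_add_one_div_factorial a)

end I1

theorem stmt14 (ρ : ℝ) (hρ : 1 < ρ) :
    ∫ θ in (0 : ℝ)..(Real.pi / 2), I1 ((Real.log ρ / 2) * Real.cos θ)
      = (ρ - 2 * Real.sqrt ρ + 1) / (Real.sqrt ρ * Real.log ρ) := by
  have hexp : exp (log ρ / 2) = √ρ := by rw [exp_half, exp_log (by linarith)]
  have hlog : log ρ ≠ 0 := (log_pos hρ).ne'
  rw [I1.integral_mul_cos, cosh_eq, exp_neg, hexp]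
  field_simp
  rw [sq_sqrt (by linarith)]
  ring
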